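/- The metric spaces (M_f^∞, OT_∞) and (M^∞, OT_∞) are not separable. More precisely, for any fixed x ∈ W, the uncountable family S = { α·δ_x : α > 0 } satisfies OT_∞(μ, ν) = d(x, Δ) > 0 for all distinct μ, ν ∈ S, so neither space contains a countable dense subset. -/

import Mathlib

/-! Common setup: the birth-death plane, Radon measures, partial optimal transport. -/

noncomputable section

open MeasureTheory Topology Filter Set
open scoped ENNReal

/-- The ambient plane `ℝ²` (with the sup-norm, i.e. `q = ∞`). -/
abbrev P2 : Type := ℝ × ℝ

/-- The birth-death plane `W = {(b,d) : b < d}`. -/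
def Wbd : Set P2 := {p | p.1 < p.2}

/-- The closure `W̄` of the birth-death plane. -/
def Wcl : Set P2 := closure Wbd

/-- The diagonal `Δ`. -/
def Diag : Set P2 := {p | p.1 = p.2}

/-- Distance from a point to the diagonal, `‖x - Δ‖`. -/
def distDiag (x : P2) : ℝ := Metric.infDist x Diag

/-- The pseudometric `d(x,y) = min(‖x-y‖, ‖x-Δ‖ + ‖y-Δ‖)` on `W̄`. -/
def dW (x y : P2) : ℝ := min (dist x y) (distDiag x + distDiag y)

/-- The support of a Borel measure: points all of whose neighborhoods have
positive measure. -/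
def msupport {α : Type*} [TopologicalSpace α] [MeasurableSpace α] (μ : Measure α) : Set α :=
  {x | ∀ U ∈ 𝓝 x, 0 < μ U}

/-- `μ` is a Radon measure on the subspace `S`: it vanishes off `S`, is inner regular
(on relatively open sets) by compact sets, outer regular (by relatively open sets), and finite
on compact subsets of `S`. -/
def RadonOn {α : Type*} [TopologicalSpace α] [MeasurableSpace α] (S : Set α)
    (μ : Measure α) : Prop :=
  μ Sᶜ = 0 ∧
  (∀ U : Set α, IsOpen U → μ (U ∩ S) = ⨆ (K : Set α) (_ : K ⊆ U ∩ S) (_ : IsCompact K), μ K) ∧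
  (∀ E : Set α, E ⊆ S → MeasurableSet E →
    μ E = ⨅ (U : Set α) (_ : IsOpen U) (_ : E ⊆ U), μ (U ∩ S)) ∧
  (∀ K : Set α, K ⊆ S → IsCompact K → μ K < ⊤)

/-- The set `M` of Radon measures on `W`. -/
def MRadon : Set (Measure P2) := {μ | RadonOn Wbd μ}

/-- `pers_∞(μ) = sup{‖x-Δ‖ : x ∈ spt μ}` (valued in `ℝ≥0∞`). -/
def persInf (μ : Measure P2) : ℝ≥0∞ := ⨆ x ∈ msupport μ, ENNReal.ofReal (distDiag x)

/-- The space `M^∞` of Radon measures on `W` with finite `∞`-persistence. -/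
def MInf : Set (Measure P2) := {μ | RadonOn Wbd μ ∧ persInf μ < ⊤}

/-- A coupling (admissible transport plan) between `μ` and `ν`: a Radon measure on
`W̄ × W̄` whose marginals restricted to Borel subsets of `W` are `μ` and `ν`. -/
def IsCoupling (π : Measure (P2 × P2)) (μ ν : Measure P2) : Prop :=
  RadonOn (Wcl ×ˢ Wcl) π ∧
  (∀ A : Set P2, A ⊆ Wbd → MeasurableSet A → π (A ×ˢ Wcl) = μ A) ∧
  (∀ B : Set P2, B ⊆ Wbd → MeasurableSet B → π (Wcl ×ˢ B) = ν B)

/-- The `∞`-cost of a transport plan: `sup {d(x,y) : (x,y) ∈ spt π}`. -/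
def costInf (π : Measure (P2 × P2)) : ℝ≥0∞ :=
  ⨆ p ∈ msupport π, ENNReal.ofReal (dW p.1 p.2)

/-- The partial `∞`-optimal transport distance. -/
def OT (μ ν : Measure P2) : ℝ≥0∞ :=
  ⨅ (π : Measure (P2 × P2)) (_ : IsCoupling π μ ν), costInf π

/-- `W_ε = {(x,y) : y - x > ε}`. -/
def Weps (ε : ℝ) : Set P2 := {p | p.2 - p.1 > ε}

/-- The space `M_f^∞` of off-diagonally finite measures. -/
def Mf : Set (Measure P2) := {μ | μ ∈ MInf ∧ ∀ ε : ℝ, 0 < ε → μ (Weps ε) < ⊤}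

/-- The space `M_fin^∞` of finite measures in `M^∞`. -/
def Mfin : Set (Measure P2) := {μ | μ ∈ MInf ∧ μ Wbd < ⊤}

/-- `f ∈ C_c(W)`: a continuous function, compactly supported, with support contained
in the open set `W` (extended by zero to the plane). -/
def IsCcW (f : P2 → ℝ) : Prop :=
  Continuous f ∧ HasCompactSupport f ∧ tsupport f ⊆ Wbd

/-- Convergence of a sequence of measures to `μ` in the distance `OT_∞`. -/
def OTConv (u : ℕ → Measure P2) (μ : Measure P2) : Prop :=
  Tendsto (fun n => OT (u n) μ) atTop (𝓝 0)


/-! A coupling of `a • δ_x` with `b • δ_y` that routes all the mass of both measures through a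
point of the diagonal costs at most `max (d(x, Δ)) (d(y, Δ))`. Conversely, since
`d(x, Δ) - d(y, Δ) ≤ d(x, y)`, a coupling of cost `< t` moves no mass between points whose
distances to the diagonal differ by at least `t`. With `t = d(x, Δ)` the mass at `x` can then
neither leave for nor arrive from the diagonal, so a cheap coupling of `a • δ_x` with `b • δ_x`
forces `a = b`; with `t = d(x, Δ) / 2` every `ν` within `d(x, Δ) / 2` of `α • δ_x` gives mass
exactly `α` to `{y ∈ W : d(y, Δ) > d(x, Δ) / 2}`. A countable family of measures therefore
approximates `α • δ_x` only for countably many `α`. -/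

lemma isOpen_Wbd : IsOpen Wbd := isOpen_lt continuous_fst continuous_snd

lemma Diag_subset_Wcl : Diag ⊆ Wcl := by
  rintro ⟨a, b⟩ (rfl : a = b)
  refine Metric.mem_closure_iff.2 fun ε hε => ⟨(a - ε / 2, a), ?_, ?_⟩
  · show a - ε / 2 < a
    linarith
  · rw [Prod.dist_eq, Real.dist_eq, dist_self, sub_sub_cancel, abs_of_pos (half_pos hε)]
    simpa using half_lt_self hε

lemma Wcl_diff_Wbd_subset_Diag : Wcl \ Wbd ⊆ Diag := fun _ ⟨hp, hpW⟩ =>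
  le_antisymm (closure_lt_subset_le continuous_fst continuous_snd hp) (not_lt.1 hpW)

lemma zero_mem_Diag : (0 : P2) ∈ Diag := rfl

lemma zero_notMem_Wbd : (0 : P2) ∉ Wbd := lt_irrefl (0 : ℝ)

lemma distDiag_nonneg (x : P2) : 0 ≤ distDiag x := Metric.infDist_nonneg

lemma distDiag_pos {x : P2} (hx : x ∈ Wbd) : 0 < distDiag x :=
  (isClosed_eq continuous_fst continuous_snd).notMem_iff_infDist_pos ⟨0, zero_mem_Diag⟩
    |>.1 hx.ne

lemma distDiag_eq_zero {p : P2} (hp : p ∈ Diag) : distDiag p = 0 := Metric.infDist_zero_of_mem hp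

lemma continuous_distDiag : Continuous distDiag := Metric.continuous_infDist_pt _

lemma dW_comm (x y : P2) : dW x y = dW y x := by
  rw [dW, dW, dist_comm, add_comm]

lemma dW_le_distDiag {x z : P2} (hz : z ∈ Diag) : dW x z ≤ distDiag x :=
  (min_le_right _ _).trans_eq (by rw [distDiag_eq_zero hz, add_zero])

lemma distDiag_sub_distDiag_le_dW (x y : P2) : distDiag x - distDiag y ≤ dW x y :=
  le_min (sub_le_iff_le_add'.2 Metric.infDist_le_infDist_add_dist)
    (by linarith [distDiag_nonneg y])

lemma distDiag_le_dW {p : P2} (hp : p ∈ Diag) (y : P2) : distDiag y ≤ dW y p := by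
  simpa [distDiag_eq_zero hp] using distDiag_sub_distDiag_le_dW y p

lemma msupport_eq_support {γ : Type*} [TopologicalSpace γ] [MeasurableSpace γ]
    (μ : Measure γ) : msupport μ = μ.support :=
  Set.ext fun x => (Measure.mem_support_iff_forall x).symm

lemma msupport_subset_of_measure_compl_eq_zero {γ : Type*} [TopologicalSpace γ]
    [MeasurableSpace γ] {μ : Measure γ} {T : Set γ} (hT : IsClosed T) (hμT : μ Tᶜ = 0) :
    msupport μ ⊆ T :=
  msupport_eq_support μ ▸ Measure.support_subset_of_isClosed hT (compl_mem_ae_iff.1 (by simpa))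

lemma radonOn_of_measure_compl_eq_zero {γ : Type*} [TopologicalSpace γ] [T1Space γ]
    [MeasurableSpace γ] {S T : Set γ} {μ : Measure γ} (hT : T.Finite) (hTS : T ⊆ S)
    (hμT : μ Tᶜ = 0) (hμ : μ univ ≠ ⊤) : RadonOn S μ := by
  refine ⟨measure_mono_null (compl_subset_compl.2 hTS) hμT, fun U _ => ?_, fun E hES _ => ?_,
    fun K _ _ => measure_lt_top_of_subset (subset_univ K) hμ⟩
  · refine le_antisymm ?_ (iSup₂_le fun K hK => iSup_le fun _ => measure_mono hK)
    rw [← measure_inter_conull hμT]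
    exact le_iSup₂_of_le (U ∩ S ∩ T) inter_subset_left
      (le_iSup_of_le (hT.subset inter_subset_right).isCompact le_rfl)
  · refine le_antisymm (le_iInf₂ fun U _ => le_iInf fun hEU => measure_mono
      (subset_inter hEU hES)) ?_
    refine iInf₂_le_of_le (T \ E)ᶜ hT.sdiff.isClosed.isOpen_compl <|
      iInf_le_of_le (fun y hy h => h.2 hy) ?_
    rw [← measure_inter_conull hμT]
    exact measure_mono fun y ⟨⟨hy, _⟩, hyT⟩ => by_contra fun hyE => hy ⟨hyT, hyE⟩

lemma costInf_le {π : Measure (P2 × P2)} {t : ℝ} (h : ∀ p ∈ msupport π, dW p.1 p.2 ≤ t) :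
    costInf π ≤ ENNReal.ofReal t :=
  iSup₂_le fun p hp => ENNReal.ofReal_le_ofReal (h p hp)

lemma measure_eq_zero_of_costInf_lt {π : Measure (P2 × P2)} {t : ℝ} {K : Set (P2 × P2)}
    (hc : costInf π < ENNReal.ofReal t) (hK : ∀ p ∈ K, t ≤ dW p.1 p.2) : π K = 0 := by
  refine measure_mono_null (show K ⊆ π.supportᶜ from fun p hpK hp => ?_)
    Measure.measure_compl_support
  have hp' : p ∈ msupport π := msupport_eq_support π ▸ hp
  exact hc.not_ge <| (ENNReal.ofReal_le_ofReal (hK p hpK)).trans <|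
    le_iSup₂ (f := fun q (_ : q ∈ msupport π) => ENNReal.ofReal (dW q.1 q.2)) p hp'

lemma smul_dirac_mem_MInf {x : P2} (hx : x ∈ Wbd) {c : ℝ≥0∞} (hc : c ≠ ⊤) :
    c • Measure.dirac x ∈ MInf := by
  have hnull : (c • Measure.dirac x) {x}ᶜ = 0 := by simp
  refine ⟨radonOn_of_measure_compl_eq_zero (finite_singleton x) (singleton_subset_iff.2 hx)
    hnull (by simpa using hc), ?_⟩
  have hsupp := msupport_subset_of_measure_compl_eq_zero isClosed_singleton hnull
  refine lt_of_le_of_lt (iSup₂_le fun y hy => ?_) (ENNReal.ofReal_lt_top (r := distDiag x))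
  rw [hsupp hy]

lemma smul_dirac_mem_Mf {x : P2} (hx : x ∈ Wbd) {c : ℝ≥0∞} (hc : c ≠ ⊤) :
    c • Measure.dirac x ∈ Mf :=
  ⟨smul_dirac_mem_MInf hx hc, fun ε _ =>
    measure_lt_top_of_subset (subset_univ _) (by simpa using hc)⟩

lemma OT_smul_dirac_le {x y : P2} (hx : x ∈ Wcl) (hy : y ∈ Wcl) {a b : ℝ≥0∞} (ha : a ≠ ⊤)
    (hb : b ≠ ⊤) :
    OT (a • Measure.dirac x) (b • Measure.dirac y)
      ≤ ENNReal.ofReal (max (distDiag x) (distDiag y)) := by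
  set π : Measure (P2 × P2) := a • Measure.dirac (x, 0) + b • Measure.dirac (0, y)
  have h0 : (0 : P2) ∈ Wcl := Diag_subset_Wcl zero_mem_Diag
  have hT : ({(x, 0), (0, y)} : Set (P2 × P2)).Finite := by simp
  have hnull : π {(x, 0), (0, y)}ᶜ = 0 := by simp [π]
  have hcoupling : IsCoupling π (a • Measure.dirac x) (b • Measure.dirac y) := by
    refine ⟨radonOn_of_measure_compl_eq_zero hT ?_ hnull (by simp [π, ha, hb]),
      fun A hA _ => ?_, fun B hB _ => ?_⟩
    · simp [insert_subset_iff, hx, hy, h0]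
    · have : (0 : P2) ∉ A := fun h => zero_notMem_Wbd (hA h)
      simp [π, this, indicator_prod_one, h0]
    · have : (0 : P2) ∉ B := fun h => zero_notMem_Wbd (hB h)
      simp [π, this, indicator_prod_one, h0]
  refine (iInf₂_le π hcoupling).trans (costInf_le fun p hp => ?_)
  rcases msupport_subset_of_measure_compl_eq_zero hT.isClosed hnull hp with rfl | rfl
  · exact (dW_le_distDiag zero_mem_Diag).trans (le_max_left _ _)
  · exact (dW_comm _ _ ▸ dW_le_distDiag zero_mem_Diag).trans (le_max_right _ _)

lemma measure_eq_of_costInf_lt {x : P2} (hx : x ∈ Wbd) {a : ℝ≥0∞} {ν : Measure P2}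
    {π : Measure (P2 × P2)} (hπ : IsCoupling π (a • Measure.dirac x) ν) {t : ℝ}
    (hc : costInf π < ENNReal.ofReal t) {B : Set P2} (hBW : B ⊆ Wbd) (hBm : MeasurableSet B)
    (hB : ∀ y ∈ B, t ≤ distDiag y) (hstay : π ({x} ×ˢ (Wcl \ B)) = 0) : ν B = a := by
  obtain ⟨-, hμ, hν⟩ := hπ
  have hxcl : x ∈ Wcl := subset_closure hx
  have hBcl : B ⊆ Wcl := hBW.trans subset_closure
  have hdiag : π ((Wcl \ Wbd) ×ˢ B) = 0 := by
    refine measure_eq_zero_of_costInf_lt hc fun p ⟨hp, hy⟩ => ?_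
    rw [dW_comm]
    exact (hB _ hy).trans (distDiag_le_dW (Wcl_diff_Wbd_subset_Diag hp) _)
  have hrest : π ((Wbd \ {x}) ×ˢ Wcl) = 0 := by
    rw [hμ _ sdiff_subset (isOpen_Wbd.measurableSet.diff (measurableSet_singleton x))]
    simp
  calc ν B = π (Wcl ×ˢ B) := (hν B hBW hBm).symm
    _ = π ({x} ×ˢ B) := by
      refine le_antisymm ?_ (measure_mono (prod_mono (singleton_subset_iff.2 hxcl) le_rfl))
      rw [← measure_sdiff_null (measure_union_null hrest hdiag)]
      refine measure_mono fun ⟨p, y⟩ ⟨⟨hp, hy⟩, hN⟩ => ⟨?_, hy⟩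
      by_contra hpx
      by_cases hpW : p ∈ Wbd
      exacts [hN (Or.inl ⟨⟨hpW, hpx⟩, hBcl hy⟩), hN (Or.inr ⟨⟨hp, hpW⟩, hy⟩)]
    _ = π ({x} ×ˢ Wcl) := by
      refine le_antisymm (measure_mono (prod_mono le_rfl hBcl)) ?_
      rw [← measure_sdiff_null hstay]
      exact measure_mono fun q ⟨⟨hp, hy⟩, hN⟩ => ⟨hp, by_contra fun hyB => hN ⟨hp, hy, hyB⟩⟩
    _ = a := by
      rw [hμ {x} (singleton_subset_iff.2 hx) (measurableSet_singleton x)]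
      simp

lemma distDiag_le_OT_smul_dirac {x : P2} (hx : x ∈ Wbd) {a b : ℝ≥0∞} (hab : a ≠ b) :
    ENNReal.ofReal (distDiag x) ≤ OT (a • Measure.dirac x) (b • Measure.dirac x) := by
  refine le_iInf₂ fun π hπ => le_of_not_gt fun hc => hab ?_
  have hmoved : π (Wcl ×ˢ (Wbd \ {x})) = 0 := by
    rw [hπ.2.2 _ sdiff_subset (isOpen_Wbd.measurableSet.diff (measurableSet_singleton x))]
    simp
  have hdiag : π ({x} ×ˢ (Wcl \ Wbd)) = 0 :=
    measure_eq_zero_of_costInf_lt hc fun ⟨p, y⟩ ⟨(hp : p = x), hy⟩ =>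
      hp ▸ distDiag_le_dW (Wcl_diff_Wbd_subset_Diag hy) x
  have hstay : π ({x} ×ˢ (Wcl \ {x})) = 0 := by
    refine measure_mono_null (fun ⟨p, y⟩ ⟨hp, hy, hyx⟩ => ?_) (measure_union_null hmoved hdiag)
    by_cases hyW : y ∈ Wbd
    exacts [Or.inl ⟨subset_closure (mem_singleton_iff.1 hp ▸ hx), hyW, hyx⟩,
      Or.inr ⟨hp, hy, hyW⟩]
  have := measure_eq_of_costInf_lt hx hπ hc (singleton_subset_iff.2 hx)
    (measurableSet_singleton x) (fun y hy => (mem_singleton_iff.1 hy).symm ▸ le_rfl) hstay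
  simpa using this.symm

lemma OT_smul_dirac_self {x : P2} (hx : x ∈ Wbd) {a b : ℝ≥0∞} (ha : a ≠ ⊤) (hb : b ≠ ⊤)
    (hab : a ≠ b) :
    OT (a • Measure.dirac x) (b • Measure.dirac x) = ENNReal.ofReal (distDiag x) :=
  le_antisymm
    (max_self (distDiag x) ▸ OT_smul_dirac_le (subset_closure hx) (subset_closure hx) ha hb)
    (distDiag_le_OT_smul_dirac hx hab)

def farFromDiag (t : ℝ) : Set P2 := {y | y ∈ Wbd ∧ t < distDiag y}

lemma measurableSet_farFromDiag (t : ℝ) : MeasurableSet (farFromDiag t) :=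
  (isOpen_Wbd.inter (isOpen_lt continuous_const continuous_distDiag)).measurableSet

lemma measure_farFromDiag_eq_of_OT_lt {x : P2} (hx : x ∈ Wbd) {a : ℝ≥0∞} {ν : Measure P2}
    (h : OT (a • Measure.dirac x) ν < ENNReal.ofReal (distDiag x / 2)) :
    ν (farFromDiag (distDiag x / 2)) = a := by
  obtain ⟨π, hπ, hc⟩ : ∃ π, IsCoupling π (a • Measure.dirac x) ν ∧
      costInf π < ENNReal.ofReal (distDiag x / 2) := by
    simpa only [OT, iInf_lt_iff, exists_prop] using h
  refine measure_eq_of_costInf_lt hx hπ hc (fun y hy => hy.1) (measurableSet_farFromDiag _)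
    (fun y hy => hy.2.le) (measure_eq_zero_of_costInf_lt hc ?_)
  rintro ⟨p, y⟩ ⟨(rfl : p = x), hy, hyB⟩
  have hy_near : distDiag y ≤ distDiag p / 2 := by
    by_cases hyW : y ∈ Wbd
    · exact not_lt.1 fun h => hyB ⟨hyW, h⟩
    · rw [distDiag_eq_zero (Wcl_diff_Wbd_subset_Diag ⟨hy, hyW⟩)]
      exact half_pos (distDiag_pos hx) |>.le
  linarith [distDiag_sub_distDiag_le_dW p y]

lemma exists_OT_smul_dirac_ge_of_countable {x : P2} (hx : x ∈ Wbd) {D : Set (Measure P2)}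
    (hD : D.Countable) : ∃ α : ℝ, 0 < α ∧
      ∀ ν ∈ D, ENNReal.ofReal (distDiag x / 2) ≤ OT (ENNReal.ofReal α • Measure.dirac x) ν := by
  by_contra! h
  have hsub : Ioi (0 : ℝ) ⊆ (fun ν => (ν (farFromDiag (distDiag x / 2))).toReal) '' D := by
    intro α (hα : 0 < α)
    obtain ⟨ν, hν, hlt⟩ := h α hα
    refine ⟨ν, hν, ?_⟩
    simp only [measure_farFromDiag_eq_of_OT_lt hx hlt, ENNReal.toReal_ofReal hα.le]
  simpa using ((hD.image _).mono hsub).measure_zero volume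

lemma not_exists_countable_OT_dense {x : P2} (hx : x ∈ Wbd) {M' : Set (Measure P2)}
    (hM' : ∀ α : ℝ, 0 < α → ENNReal.ofReal α • Measure.dirac x ∈ M') :
    ¬ ∃ D ⊆ M', D.Countable ∧ ∀ μ ∈ M', ∀ ε : ℝ, 0 < ε → ∃ ν ∈ D, OT μ ν < ENNReal.ofReal ε := by
  rintro ⟨D, -, hD, hdense⟩
  obtain ⟨α, hα, hfar⟩ := exists_OT_smul_dirac_ge_of_countable hx hD
  obtain ⟨ν, hν, hlt⟩ := hdense _ (hM' α hα) _ (half_pos (distDiag_pos hx))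
  exact (hfar ν hν).not_gt hlt

/-- `(M_f^∞, OT_∞)` and `(M^∞, OT_∞)` are not separable: for a fixed
`x ∈ W`, the uncountable family `{α·δ_x : α > 0}` is pairwise at distance
`d(x,Δ) > 0`, so neither space admits a countable dense subset. -/
theorem MInf_and_Mf_not_separable (x : P2) (hx : x ∈ Wbd) :
    (∀ α β : ℝ, 0 < α → 0 < β → α ≠ β →
      OT (ENNReal.ofReal α • Measure.dirac x) (ENNReal.ofReal β • Measure.dirac x)
        = ENNReal.ofReal (distDiag x) ∧ 0 < distDiag x) ∧
    ¬ (∃ D : Set (Measure P2), D ⊆ Mf ∧ D.Countable ∧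
        ∀ μ ∈ Mf, ∀ ε : ℝ, 0 < ε → ∃ ν ∈ D, OT μ ν < ENNReal.ofReal ε) ∧
    ¬ (∃ D : Set (Measure P2), D ⊆ MInf ∧ D.Countable ∧
        ∀ μ ∈ MInf, ∀ ε : ℝ, 0 < ε → ∃ ν ∈ D, OT μ ν < ENNReal.ofReal ε) := by
  refine ⟨fun α β hα hβ hαβ => ⟨?_, distDiag_pos hx⟩,
    not_exists_countable_OT_dense hx fun α _ => smul_dirac_mem_Mf hx ENNReal.ofReal_ne_top,
    not_exists_countable_OT_dense hx fun α _ => smul_dirac_mem_MInf hx ENNReal.ofReal_ne_top⟩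
  exact OT_smul_dirac_self hx ENNReal.ofReal_ne_top ENNReal.ofReal_ne_top
    ((ENNReal.ofReal_eq_ofReal_iff hα.le hβ.le).not.2 hαβ)
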